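/- arXiv:2605.01425 — 4 statements merged into one kernel-verified Lean document; each statement's English description precedes it below -/
import Mathlib

section
/- For every ε ≥ 0 and every δ with 0 ≤ δ < 1, there exist a finite token alphabet X containing an end token ⊥, a finite data universe 𝒮, and a credit-attributing next-token predictor M̃ such that M̃ is (0,0)-CCA but its crediting rollout G̃ is not (ε,δ)-CCA. -/
open scoped ENNReal Classical

noncomputable section

namespace CCA

variable {α X D Y : Type*}

/-- Conditional probability of an event `E` given event `B`, for a set function `P`. -/
def prCond (P : Set α → ℝ≥0∞) (B : Set α) : Set α → ℝ≥0∞ := fun E => P (E ∩ B) / P B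

/-- `(ε,δ)`-closeness of two set functions, as in differential privacy. -/
def Close (ε δ : ℝ) (P Q : Set α → ℝ≥0∞) : Prop :=
  ∀ E : Set α,
    P E ≤ ENNReal.ofReal (Real.exp ε) * Q E + ENNReal.ofReal δ ∧
    Q E ≤ ENNReal.ofReal (Real.exp ε) * P E + ENNReal.ofReal δ

/-- `(ε,δ)`-counterfactual credit attribution for a kernel `K` mapping a dataset `S` and a
prompt `x` to a (sub)probability set function over (output, credit set) pairs: for every
prompt, dataset and `s ∈ S`, either `s` is credited with probability `1`, or the conditional
distribution given `s` not credited is `(ε,δ)`-close to the counterfactual on `S \ {s}`. -/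
def IsCCA (ε δ : ℝ) (K : Set D → List X → Set (Y × Set D) → ℝ≥0∞) : Prop :=
  ∀ (S : Set D) (x : List X) (s : D), s ∈ S →
    K S x {q | s ∈ q.2} = 1 ∨
    Close ε δ (prCond (K S x) {q | s ∉ q.2}) (K (S \ {s}) x)

/-- The event kernel associated with a PMF-valued crediting algorithm. -/
def pmfKernel (M : Set D → List X → PMF (Y × Set D)) :
    Set D → List X → Set (Y × Set D) → ℝ≥0∞ :=
  fun S x E => (M S x).toOuterMeasure E

/-- Probability that the crediting rollout of `M` on current prompt `x` produces exactly the
trace `w` of (token, credit set) pairs. -/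
def traceProb (M : Set D → List X → PMF (X × Set D)) (S : Set D) :
    List X → List (X × Set D) → ℝ≥0∞
  | _, [] => 1
  | x, q :: w => M S x q * traceProb M S (x ++ [q.1]) w

/-- A terminal trace: the last generated token is `bot` and no earlier token is `bot`. -/
def IsTerminal (bot : X) (w : List (X × Set D)) : Prop :=
  (w.map Prod.fst).getLast? = some bot ∧ ∀ y ∈ (w.map Prod.fst).dropLast, y ≠ bot

/-- The union of the credit sets appearing along a trace. -/
def creditOf (w : List (X × Set D)) : Set D := w.foldr (fun q acc => q.2 ∪ acc) ∅

/-- Probability that the crediting rollout of `M` on `(S, x0)` outputs the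
(generated string, credit set) pair `o`. -/
def rolloutProb (bot : X) (M : Set D → List X → PMF (X × Set D)) (S : Set D)
    (x0 : List X) (o : List X × Set D) : ℝ≥0∞ :=
  ∑' w : {w : List (X × Set D) //
      IsTerminal bot w ∧ x0 ++ w.map Prod.fst = o.1 ∧ creditOf w = o.2},
    traceProb M S x0 w.1

/-- Event kernel of the crediting rollout of `M`. -/
def rolloutK (bot : X) (M : Set D → List X → PMF (X × Set D)) :
    Set D → List X → Set (List X × Set D) → ℝ≥0∞ :=
  fun S x0 E => ∑' o : E, rolloutProb bot M S x0 ↑o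

/-! The predictor `delayedCredit` first emits the non-end token `true` with probability `p`
and otherwise stops; after `true` it stops and credits the whole dataset. Each single step
either credits a datum `s` surely or does not look at the dataset at all, so the predictor is
`(0,0)`-CCA. Its rollout on `{s}` outputs the string `[true, false]` with probability `p`, and
always credits `s` when it does; conditioned on `s` not being credited, that string therefore
has probability `0`, whereas the counterfactual rollout on `∅` still produces it with
probability `p > δ`. Since `s` is credited only with probability `p < 1`, the rollout is not
`(ε,δ)`-CCA. -/

section Closeness

variable {α : Type*}

theorem close_self {ε δ : ℝ} (hε : 0 ≤ ε) (P : Set α → ℝ≥0∞) :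
    Close ε δ P P := by
  have h : ∀ E, P E ≤ ENNReal.ofReal (Real.exp ε) * P E + ENNReal.ofReal δ := fun E =>
    calc P E ≤ ENNReal.ofReal (Real.exp ε) * P E :=
          le_mul_of_one_le_left' (ENNReal.one_le_ofReal.2 (Real.one_le_exp hε))
      _ ≤ _ := le_self_add
  exact fun E => ⟨h E, h E⟩

theorem prCond_toOuterMeasure_of_support_subset (P : PMF α) {B : Set α}
    (hB : P.support ⊆ B) : prCond P.toOuterMeasure B = P.toOuterMeasure := by
  funext E
  have hE : P.toOuterMeasure (E ∩ B) = P.toOuterMeasure E :=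
    P.toOuterMeasure_apply_eq_of_inter_support_eq (by
      rw [Set.inter_assoc, Set.inter_eq_right.2 hB])
  rw [prCond, hE, (P.toOuterMeasure_apply_eq_one_iff B).2 hB, div_one]

end Closeness

theorem isCCA_pmfKernel_of_credit_or_ignore {X D Y : Type*} {ε δ : ℝ} (hε : 0 ≤ ε)
    (M : Set D → List X → PMF (Y × Set D))
    (hM : ∀ (S : Set D) (x : List X) (s : D), s ∈ S →
      (M S x).support ⊆ {q | s ∈ q.2} ∨
      ((M S x).support ⊆ {q | s ∉ q.2} ∧ M (S \ {s}) x = M S x)) :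
    IsCCA ε δ (pmfKernel M) := by
  intro S x s hs
  rcases hM S x s hs with hcredit | ⟨hignore, hM⟩
  · exact .inl (((M S x).toOuterMeasure_apply_eq_one_iff _).2 hcredit)
  · right
    change Close ε δ (prCond (M S x).toOuterMeasure _) (M (S \ {s}) x).toOuterMeasure
    rw [hM, prCond_toOuterMeasure_of_support_subset _ hignore]
    exact close_self hε _

section Rollout

variable {X D : Type*} {bot : X}

theorem not_isTerminal_nil : ¬ IsTerminal bot ([] : List (X × Set D)) := by
  simp [IsTerminal]

theorem isTerminal_cons_iff {q : X × Set D} {w : List (X × Set D)} :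
    IsTerminal bot (q :: w) ↔ (q.1 = bot ∧ w = []) ∨ (q.1 ≠ bot ∧ IsTerminal bot w) := by
  rcases w with _ | ⟨r, w⟩
  · simp [IsTerminal]
  · simp only [IsTerminal, List.map_cons, List.getLast?_cons_cons, List.dropLast_cons_cons,
      List.mem_cons, forall_eq_or_imp]
    tauto

theorem rolloutK_eq_tsum_traces (M : Set D → List X → PMF (X × Set D)) (S : Set D)
    (x0 : List X) (E : Set (List X × Set D)) :
    rolloutK bot M S x0 E = ∑' w, {w | IsTerminal bot w ∧
      (x0 ++ w.map Prod.fst, creditOf w) ∈ E}.indicator (traceProb M S x0) w := by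
  calc rolloutK bot M S x0 E
      = ∑' (o : E) (w), {w | IsTerminal bot w ∧ x0 ++ w.map Prod.fst = o.1.1 ∧
          creditOf w = o.1.2}.indicator (traceProb M S x0) w :=
        tsum_congr fun o => tsum_subtype {w | _} (traceProb M S x0)
    _ = ∑' (w) (o : E), {w | IsTerminal bot w ∧ x0 ++ w.map Prod.fst = o.1.1 ∧
          creditOf w = o.1.2}.indicator (traceProb M S x0) w := ENNReal.tsum_comm
    _ = _ := tsum_congr fun w => by
      simp only [Set.indicator_apply, Set.mem_ofPred_eq]
      split_ifs with hw
      · rw [tsum_eq_single ⟨_, hw.2⟩ fun o ho =>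
          if_neg fun h => ho (Subtype.ext (Prod.ext h.2.1 h.2.2).symm)]
        simp [hw.1]
      · exact ENNReal.tsum_eq_zero.2 fun o =>
          if_neg fun ⟨hT, h1, h2⟩ => hw ⟨hT, (Prod.ext h1 h2 : (_, _) = o.1) ▸ o.2⟩

end Rollout

section DelayedCredit

variable {D : Type*} (p : ℝ≥0∞) (hp : p ≤ 1)

def biasedCoin : PMF Bool :=
  PMF.ofFintype (fun b => if b then p else 1 - p) (by simp [add_tsub_cancel_of_le hp])

def delayedCredit (S : Set D) (x : List Bool) : PMF (Bool × Set D) :=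
  if x = [] then (biasedCoin p hp).map (·, ∅)
  else PMF.pure (false, if x = [true] then S else ∅)

theorem delayedCredit_nil (S : Set D) :
    delayedCredit p hp S [] = (biasedCoin p hp).map (·, ∅) := if_pos rfl

theorem delayedCredit_of_ne_nil (S : Set D) {x : List Bool} (hx : x ≠ []) :
    delayedCredit p hp S x = PMF.pure (false, if x = [true] then S else ∅) := if_neg hx

theorem traceProb_delayedCredit_continue (S : Set D) :
    traceProb (delayedCredit p hp) S [] [(true, ∅), (false, S)] = p := by
  simp [traceProb, delayedCredit, PMF.map_apply, biasedCoin]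

theorem traceProb_delayedCredit_stop (S : Set D) :
    traceProb (delayedCredit p hp) S [] [(false, ∅)] = 1 - p := by
  simp [traceProb, delayedCredit, PMF.map_apply, biasedCoin]

theorem eq_of_isTerminal_of_traceProb_delayedCredit_ne_zero {S : Set D}
    {w : List (Bool × Set D)} (hw : IsTerminal false w)
    (hpos : traceProb (delayedCredit p hp) S [] w ≠ 0) :
    w = [(true, ∅), (false, S)] ∨ w = [(false, ∅)] := by
  rcases w with _ | ⟨q, w⟩
  · exact absurd hw not_isTerminal_nil
  obtain ⟨hq, hpos⟩ := mul_ne_zero_iff.1 hpos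
  obtain ⟨b, -, rfl⟩ : q ∈ (·, (∅ : Set D)) '' (biasedCoin p hp).support := by
    rwa [← PMF.support_map, ← delayedCredit_nil p hp S]
  rcases b with _ | _
  · simp_all [isTerminal_cons_iff]
  · have hw := (isTerminal_cons_iff.1 hw).resolve_left (by simp)
    rcases w with _ | ⟨r, w⟩
    · exact absurd hw.2 not_isTerminal_nil
    obtain ⟨hr, -⟩ := mul_ne_zero_iff.1 hpos
    obtain rfl : r = (false, S) := by
      simpa [delayedCredit_of_ne_nil p hp S (List.cons_ne_nil _ _)] using hr
    simp_all [isTerminal_cons_iff]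

theorem rolloutK_delayedCredit (S : Set D) (E : Set (List Bool × Set D)) :
    rolloutK false (delayedCredit p hp) S [] E =
      E.indicator (fun _ => p) ([true, false], S) +
        E.indicator (fun _ => 1 - p) ([false], ∅) := by
  rw [rolloutK_eq_tsum_traces, tsum_eq_sum (s := {[(true, ∅), (false, S)], [(false, ∅)]}),
    Finset.sum_pair (by simp)]
  · simp [Set.indicator_apply, traceProb_delayedCredit_continue, traceProb_delayedCredit_stop,
      isTerminal_cons_iff, not_isTerminal_nil, creditOf]
  · intro w hw
    refine Set.indicator_apply_eq_zero.2 fun ⟨hT, _⟩ => not_not.1 fun hpos => hw ?_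
    simpa using eq_of_isTerminal_of_traceProb_delayedCredit_ne_zero p hp hT hpos

theorem isCCA_pmfKernel_delayedCredit {ε δ : ℝ} (hε : 0 ≤ ε) :
    IsCCA ε δ (pmfKernel (delayedCredit (D := D) p hp)) := by
  refine isCCA_pmfKernel_of_credit_or_ignore hε _ fun S x s hs => ?_
  by_cases hx : x = []
  · subst hx
    refine .inr ⟨?_, by simp only [delayedCredit_nil]⟩
    rw [delayedCredit_nil, PMF.support_map]
    rintro _ ⟨b, -, rfl⟩
    exact Set.notMem_empty s
  · simp only [delayedCredit_of_ne_nil p hp _ hx, PMF.support_pure, Set.singleton_subset_iff,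
      Set.mem_ofPred_eq]
    split_ifs
    · exact .inl hs
    · exact .inr ⟨Set.notMem_empty s, rfl⟩

theorem support_delayedCredit_credit_subset (S : Set D) (x : List Bool) {q : Bool × Set D}
    (hq : q ∈ (delayedCredit p hp S x).support) : q.2 ⊆ S := by
  by_cases hx : x = []
  · rw [hx, delayedCredit_nil, PMF.support_map] at hq
    obtain ⟨b, -, rfl⟩ := hq
    exact Set.empty_subset S
  · rw [delayedCredit_of_ne_nil p hp S hx, PMF.support_pure, Set.mem_singleton_iff] at hq
    subst hq
    split_ifs
    exacts [le_rfl, Set.empty_subset S]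

theorem not_isCCA_rolloutK_delayedCredit [Nonempty D] {ε δ : ℝ} (hδ : ENNReal.ofReal δ < p)
    (hp1 : p < 1) : ¬ IsCCA ε δ (rolloutK false (delayedCredit (D := D) p hp)) := by
  intro hCCA
  obtain ⟨s⟩ := ‹Nonempty D›
  rcases hCCA {s} [] s rfl with hcredited | hclose
  · have : rolloutK false (delayedCredit p hp) {s} [] {q | s ∈ q.2} = p := by
      simp [rolloutK_delayedCredit]
    exact hp1.ne (this ▸ hcredited)
  · set E : Set (List Bool × Set D) := {o | o.1 = [true, false]}
    have hcond : prCond (rolloutK false (delayedCredit p hp) {s} []) {q | s ∉ q.2} E = 0 := by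
      simp [prCond, rolloutK_delayedCredit, E]
    have hcounter : rolloutK false (delayedCredit p hp) ({s} \ {s}) [] E = p := by
      simp [rolloutK_delayedCredit, E]
    have hle := (hclose E).2
    rw [hcond, hcounter, mul_zero, zero_add] at hle
    exact hδ.not_ge hle

end DelayedCredit

theorem stmt0_general (ε δ : ℝ) (hδ1 : δ < 1) :
    ∃ (X : Type) (_ : Fintype X) (bot : X) (D : Type) (_ : Fintype D)
      (M : Set D → List X → PMF (X × Set D)),
      (∀ (S : Set D) (x : List X), bot ∈ x →
        (M S x).toOuterMeasure {q : X × Set D | q.1 = bot} = 1) ∧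
      (∀ (S : Set D) (x : List X) (q : X × Set D), M S x q ≠ 0 → q.2 ⊆ S) ∧
      IsCCA 0 0 (pmfKernel M) ∧
      ¬ IsCCA ε δ (rolloutK bot M) := by
  obtain ⟨p, hδp, hp1⟩ := exists_between (ENNReal.ofReal_lt_one.2 hδ1)
  refine ⟨Bool, inferInstance, false, Unit, inferInstance, delayedCredit p hp1.le, ?_,
    fun S x _ hq => support_delayedCredit_credit_subset p hp1.le S x hq,
    isCCA_pmfKernel_delayedCredit p hp1.le le_rfl,
    not_isCCA_rolloutK_delayedCredit p hp1.le hδp hp1⟩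
  intro S x hx
  rw [delayedCredit_of_ne_nil p hp1.le S (List.ne_nil_of_mem hx), PMF.toOuterMeasure_pure_apply]
  exact if_pos rfl

/-- For every `ε ≥ 0` and `0 ≤ δ < 1` there are a finite token alphabet with an end token, a
finite data universe, and a crediting next-token predictor that is `(0,0)`-CCA whose
crediting rollout is not `(ε,δ)`-CCA. -/
theorem stmt0 (ε δ : ℝ) (hε : 0 ≤ ε) (hδ0 : 0 ≤ δ) (hδ1 : δ < 1) :
    ∃ (X : Type) (_ : Fintype X) (bot : X) (D : Type) (_ : Fintype D)
      (M : Set D → List X → PMF (X × Set D)),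
      (∀ (S : Set D) (x : List X), bot ∈ x →
        (M S x).toOuterMeasure {q : X × Set D | q.1 = bot} = 1) ∧
      (∀ (S : Set D) (x : List X) (q : X × Set D), M S x q ≠ 0 → q.2 ⊆ S) ∧
      IsCCA 0 0 (pmfKernel M) ∧
      ¬ IsCCA ε δ (rolloutK bot M) :=
  stmt0_general ε δ hδ1

end CCA
end
end

section
/- Suppose the credit-attributing next-token predictor M̃ is (ε,0)-CCA and its crediting rollout G̃ is (ε',0)-CCA. Fix a dataset S, a document s_i ∈ S, and a prompt x₀, and suppose Pr[G̃(S, x₀) credits s_i] < 1. Then for every pair (x⁻ⁱ, C⁻ⁱ) in the support of G̃(S, x₀) with s_i ∉ C⁻ⁱ, writing x⁻ⁱ = x₀ ∥ x₁ ∥ … ∥ x_n for the n generated tokens, it holds that ε' ≥ ln( (∏_{j=1}^{n} Pr_{(t,C')∼M̃(S, x₀∥x₁∥…∥x_{j−1})}[s_i ∉ C']) / Pr[G̃(S,x₀) does not credit s_i] ) − n·ε. -/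
/-! Fix a positive-probability trace producing the output `(x0 ++ t, C)`. Since it never credits
`s`, every prefix `x0 ++ t.take j` has positive "not credited" mass `d_j`, so `M` is `ε`-close there,
which gives `M_{S∖s}(q) · d_j ≤ e^ε M_S(q)` for every token `q` not crediting `s`. Multiplying along
the trace and summing over traces: `Q · ∏ d_j ≤ e^{nε} P`, where `P`, `Q` are the probabilities
of the output under the rollout on `S` and on `S ∖ {s}`. The rollout being `ε'`-CCA gives
`P / Pr[s not credited] ≤ e^{ε'} Q`, and combining the two bounds cancels `P`. -/

open scoped ENNReal Classical

noncomputable section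

namespace CCA

variable {α X D Y : Type*}

theorem Close.mul_le_of_mem {ε : ℝ} {P Q : Set α → ℝ≥0∞} {B : Set α} {a : α}
    (h : Close ε 0 (prCond P B) Q) (ha : a ∈ B) :
    Q {a} * P B ≤ ENNReal.ofReal (Real.exp ε) * P {a} := by
  have hQ := (h {a}).2
  rw [ENNReal.ofReal_zero, add_zero, prCond,
    Set.inter_eq_self_of_subset_left (Set.singleton_subset_iff.2 ha)] at hQ
  calc Q {a} * P B ≤ ENNReal.ofReal (Real.exp ε) * (P {a} / P B) * P B := by gcongr
    _ = ENNReal.ofReal (Real.exp ε) * (P B * (P {a} / P B)) := by ring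
    _ ≤ ENNReal.ofReal (Real.exp ε) * P {a} := by gcongr; exact ENNReal.mul_div_le

theorem Close.div_le_of_mem {ε : ℝ} {P Q : Set α → ℝ≥0∞} {B : Set α} {a : α}
    (h : Close ε 0 (prCond P B) Q) (ha : a ∈ B) :
    P {a} / P B ≤ ENNReal.ofReal (Real.exp ε) * Q {a} := by
  simpa [prCond, Set.inter_eq_self_of_subset_left (Set.singleton_subset_iff.2 ha)] using (h {a}).1

def noCreditProb (p : PMF (Y × Set D)) (s : D) : ℝ≥0∞ := p.toOuterMeasure {q | s ∉ q.2}

theorem apply_le_noCreditProb (p : PMF (Y × Set D)) {s : D} {q : Y × Set D} (hq : s ∉ q.2) :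
    p q ≤ noCreditProb p s := by
  rw [← PMF.toOuterMeasure_apply_singleton]
  exact MeasureTheory.measure_mono (Set.singleton_subset_iff.2 hq)

theorem IsCCA.close_pmfKernel {ε δ : ℝ} {M : Set D → List X → PMF (Y × Set D)}
    (hM : IsCCA ε δ (pmfKernel M)) {S : Set D} {s : D} (hs : s ∈ S) {x : List X}
    (hd : noCreditProb (M S x) s ≠ 0) :
    Close ε δ (prCond (pmfKernel M S x) {q | s ∉ q.2}) (pmfKernel M (S \ {s}) x) := by
  refine (hM S x s hs).resolve_left fun hcredit => hd ?_
  rw [pmfKernel, PMF.toOuterMeasure_apply_eq_one_iff] at hcredit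
  exact (PMF.toOuterMeasure_apply_eq_zero_iff _ _).2 <|
    Set.disjoint_left.2 fun q hq hsq => hsq (hcredit hq)

theorem IsCCA.apply_mul_noCreditProb_le {ε : ℝ} {M : Set D → List X → PMF (Y × Set D)}
    (hM : IsCCA ε 0 (pmfKernel M)) {S : Set D} {s : D} (hs : s ∈ S) {x : List X}
    (hd : noCreditProb (M S x) s ≠ 0) {q : Y × Set D} (hq : s ∉ q.2) :
    M (S \ {s}) x q * noCreditProb (M S x) s ≤ ENNReal.ofReal (Real.exp ε) * M S x q := by
  have h := (hM.close_pmfKernel hs hd).mul_le_of_mem (a := q) hq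
  simp only [pmfKernel, PMF.toOuterMeasure_apply_singleton] at h
  exact h

theorem prod_range_prefix_cons {β γ : Type*} [CommMonoid β] (f : List X → β) (g : γ → X)
    (x : List X) (c : γ) (w : List γ) :
    ∏ j ∈ Finset.range (c :: w).length, f (x ++ ((c :: w).map g).take j)
      = f x * ∏ j ∈ Finset.range w.length, f (x ++ [g c] ++ (w.map g).take j) := by
  simp [Finset.prod_range_succ', List.take_succ_cons, mul_comm]

theorem subset_creditOf {w : List (X × Set D)} {q : X × Set D} (hq : q ∈ w) :
    q.2 ⊆ creditOf w := by
  induction w with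
  | nil => simp at hq
  | cons a w ih =>
    rcases List.mem_cons.1 hq with rfl | h
    · exact Set.subset_union_left
    · exact (ih h).trans Set.subset_union_right

section Trace

variable (M : Set D → List X → PMF (X × Set D))

theorem traceProb_le_prod_noCreditProb (S : Set D) {s : D} {w : List (X × Set D)}
    (hw : ∀ q ∈ w, s ∉ q.2) (x : List X) :
    traceProb M S x w
      ≤ ∏ j ∈ Finset.range w.length, noCreditProb (M S (x ++ (w.map Prod.fst).take j)) s := by
  induction w generalizing x with
  | nil => simp [traceProb]
  | cons q w ih =>
    rw [traceProb, prod_range_prefix_cons (fun y => noCreditProb (M S y) s)]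
    exact mul_le_mul' (apply_le_noCreditProb _ (hw q (by simp)))
      (ih (fun r hr => hw r (by simp [hr])) _)

theorem traceProb_mul_prod_le (S S' : Set D) (f : List X → ℝ≥0∞) (a : ℝ≥0∞)
    (w : List (X × Set D)) (x : List X)
    (hstep : ∀ j < w.length, ∀ q ∈ w, M S' (x ++ (w.map Prod.fst).take j) q *
      f (x ++ (w.map Prod.fst).take j) ≤ a * M S (x ++ (w.map Prod.fst).take j) q) :
    traceProb M S' x w * ∏ j ∈ Finset.range w.length, f (x ++ (w.map Prod.fst).take j)
      ≤ a ^ w.length * traceProb M S x w := by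
  induction w generalizing x with
  | nil => simp [traceProb]
  | cons q w ih =>
    have hhead : M S' x q * f x ≤ a * M S x q := by simpa using hstep 0 (by simp) q (by simp)
    have htail := ih (x ++ [q.1]) fun j hj r hr => by
      simpa using hstep (j + 1) (by simpa using hj) r (by simp [hr])
    rw [traceProb, traceProb, prod_range_prefix_cons f, List.length_cons, pow_succ]
    calc M S' x q * traceProb M S' (x ++ [q.1]) w *
          (f x * ∏ j ∈ Finset.range w.length, f (x ++ [q.1] ++ (w.map Prod.fst).take j))
        = (M S' x q * f x) * (traceProb M S' (x ++ [q.1]) w *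
          ∏ j ∈ Finset.range w.length, f (x ++ [q.1] ++ (w.map Prod.fst).take j)) := by ring
      _ ≤ (a * M S x q) * (a ^ w.length * traceProb M S (x ++ [q.1]) w) :=
          mul_le_mul' hhead htail
      _ = a ^ w.length * a * (M S x q * traceProb M S (x ++ [q.1]) w) := by ring

theorem rolloutProb_mul_prod_le (bot : X) (S S' : Set D) (f : List X → ℝ≥0∞) (a : ℝ≥0∞)
    {s : D} (x0 t : List X) {C : Set D} (hC : s ∉ C)
    (hstep : ∀ j < t.length, ∀ q : X × Set D, s ∉ q.2 →
      M S' (x0 ++ t.take j) q * f (x0 ++ t.take j) ≤ a * M S (x0 ++ t.take j) q) :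
    rolloutProb bot M S' x0 (x0 ++ t, C) * ∏ j ∈ Finset.range t.length, f (x0 ++ t.take j)
      ≤ a ^ t.length * rolloutProb bot M S x0 (x0 ++ t, C) := by
  rw [rolloutProb, rolloutProb, ← ENNReal.tsum_mul_right, ← ENNReal.tsum_mul_left]
  refine ENNReal.tsum_le_tsum fun ⟨w, _, hwx, hwC⟩ => ?_
  obtain rfl : w.map Prod.fst = t := List.append_cancel_left hwx
  obtain rfl : creditOf w = C := hwC
  rw [List.length_map] at hstep ⊢
  exact traceProb_mul_prod_le M S S' f a w x0 fun j hj q hq =>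
    hstep j hj q fun hsq => hC (subset_creditOf hq hsq)

theorem prod_noCreditProb_ne_zero (bot : X) (S : Set D) {s : D} (x0 t : List X) {C : Set D}
    (hC : s ∉ C) (hsupp : rolloutProb bot M S x0 (x0 ++ t, C) ≠ 0) :
    ∏ j ∈ Finset.range t.length, noCreditProb (M S (x0 ++ t.take j)) s ≠ 0 := by
  obtain ⟨⟨w, _, hwx, hwC⟩, hw⟩ : ∃ w : {w : List (X × Set D) //
      IsTerminal bot w ∧ x0 ++ w.map Prod.fst = x0 ++ t ∧ creditOf w = C},
      traceProb M S x0 w.1 ≠ 0 := by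
    by_contra! h
    exact hsupp (ENNReal.tsum_eq_zero.2 h)
  obtain rfl : w.map Prod.fst = t := List.append_cancel_left hwx
  rw [List.length_map]
  refine ne_bot_of_le_ne_bot hw (traceProb_le_prod_noCreditProb M S (fun q hq hsq => ?_) x0)
  exact hC (hwC ▸ subset_creditOf hq hsq)

end Trace

theorem rolloutK_singleton (bot : X) (M : Set D → List X → PMF (X × Set D))
    (S : Set D) (x0 : List X) (o : List X × Set D) :
    rolloutK bot M S x0 {o} = rolloutProb bot M S x0 o :=
  tsum_singleton o _

theorem rolloutK_mono (bot : X) (M : Set D → List X → PMF (X × Set D))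
    (S : Set D) (x0 : List X) {E F : Set (List X × Set D)} (h : E ⊆ F) :
    rolloutK bot M S x0 E ≤ rolloutK bot M S x0 F :=
  ENNReal.tsum_mono_subtype _ h

theorem _root_.ENNReal.le_mul_mul_of_div_le_of_mul_le {P Q A B c d : ℝ≥0∞}
    (hP : P ≠ 0) (hPB : P ≤ B) (hB : B ≠ ⊤) (hdiv : P / B ≤ c * Q) (hmul : Q * A ≤ d * P) :
    A ≤ c * d * B := by
  have hB0 : B ≠ 0 := ne_bot_of_le_ne_bot hP hPB
  have hPtop : P ≠ ⊤ := ne_top_of_le_ne_top hB hPB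
  refine (ENNReal.mul_le_mul_iff_right hP hPtop).1 ?_
  calc P * A = P / B * B * A := by rw [ENNReal.div_mul_cancel hB0 hB]
    _ ≤ c * Q * B * A := by gcongr
    _ = c * B * (Q * A) := by ring
    _ ≤ c * B * (d * P) := by gcongr
    _ = P * (c * d * B) := by ring

theorem _root_.Real.log_toReal_div_le {A B : ℝ≥0∞} {c : ℝ} (hA : A ≠ 0) (hB0 : B ≠ 0)
    (hB : B ≠ ⊤) (h : A ≤ ENNReal.ofReal (Real.exp c) * B) :
    Real.log (A.toReal / B.toReal) ≤ c := by
  have hA' : 0 < A.toReal :=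
    ENNReal.toReal_pos hA (ne_top_of_le_ne_top (ENNReal.mul_ne_top ENNReal.ofReal_ne_top hB) h)
  have hB' : 0 < B.toReal := ENNReal.toReal_pos hB0 hB
  rw [Real.log_le_iff_le_exp (div_pos hA' hB'), div_le_iff₀ hB']
  simpa [ENNReal.toReal_mul, (Real.exp_pos c).le] using
    ENNReal.toReal_mono (ENNReal.mul_ne_top ENNReal.ofReal_ne_top hB) h

/-- Composition lower bound: if the crediting next-token predictor `M` is `(ε,0)`-CCA, its
rollout is `(ε',0)`-CCA and terminates with probability one, and the rollout on `(S, x0)`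
credits `s` with probability `< 1`, then for every output `(x0 ++ t, C)` in the support of
the rollout with `s ∉ C`,
`ε' ≥ ln( (∏_j Pr_{M(S, x0∥t_1…t_{j-1})}[s not credited]) / Pr[rollout does not credit s] )
      - |t| ε`. -/
theorem stmt3 {X D : Type*} (bot : X) (M : Set D → List X → PMF (X × Set D)) (ε ε' : ℝ)
    (hM : IsCCA ε 0 (pmfKernel M))
    (hterm : ∀ (S : Set D) (x : List X), rolloutK bot M S x Set.univ = 1)
    (hG : IsCCA ε' 0 (rolloutK bot M))
    (S : Set D) (s : D) (hs : s ∈ S) (x0 : List X)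
    (hlt : rolloutK bot M S x0 {q | s ∈ q.2} < 1)
    (t : List X) (C : Set D)
    (hsupp : rolloutProb bot M S x0 (x0 ++ t, C) ≠ 0) (hC : s ∉ C) :
    ε' ≥ Real.log
        ((∏ j ∈ Finset.range t.length,
            ((M S (x0 ++ t.take j)).toOuterMeasure {q : X × Set D | s ∉ q.2}).toReal) /
          (rolloutK bot M S x0 {q | s ∉ q.2}).toReal)
      - (t.length : ℝ) * ε := by
  have hprod := prod_noCreditProb_ne_zero M bot S x0 t hC hsupp
  have hmul := rolloutProb_mul_prod_le M bot S (S \ {s}) (fun y => noCreditProb (M S y) s) _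
    x0 t hC fun j hj q hq => hM.apply_mul_noCreditProb_le hs
      (Finset.prod_ne_zero_iff.1 hprod j (Finset.mem_range.2 hj)) hq
  have hdiv := ((hG S x0 s hs).resolve_left hlt.ne).div_le_of_mem (a := (x0 ++ t, C)) hC
  rw [rolloutK_singleton, rolloutK_singleton] at hdiv
  have hPB : rolloutProb bot M S x0 (x0 ++ t, C) ≤ rolloutK bot M S x0 {q | s ∉ q.2} := by
    rw [← rolloutK_singleton]
    exact rolloutK_mono bot M S x0 (Set.singleton_subset_iff.2 hC)
  have hB : rolloutK bot M S x0 {q | s ∉ q.2} ≠ ⊤ :=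
    ne_top_of_le_ne_top (hterm S x0 ▸ ENNReal.one_ne_top)
      (rolloutK_mono bot M S x0 (Set.subset_univ _))
  have hbound := ENNReal.le_mul_mul_of_div_le_of_mul_le hsupp hPB hB hdiv hmul
  rw [← ENNReal.ofReal_pow (Real.exp_pos ε).le, ← Real.exp_nat_mul,
    ← ENNReal.ofReal_mul (Real.exp_pos _).le, ← Real.exp_add] at hbound
  rw [ge_iff_le, ← ENNReal.toReal_prod, sub_le_iff_le_add]
  exact Real.log_toReal_div_le hprod (ne_bot_of_le_ne_bot hsupp hPB) hB hbound

end CCA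
end
end

section
/- Let M̃ be an (ε,0)-CCA credit-attributing next-token predictor, S a dataset, s_i ∈ S, and x₀ a prompt. For any trace w = ((x₁, C'₁), …, (x_n, C'_n)) of token–credit-set pairs with s_i ∉ C'₁ ∪ … ∪ C'_n, let P(w) = ∏_{j=1}^n M̃(S, x₀∥x₁∥…∥x_{j−1})((x_j, C'_j)) be the probability that the crediting rollout on (S, x₀) produces exactly the trace w, and let Q(w) be the analogous trace probability on (S∖{s_i}, x₀). Then P(w) ≥ e^{−εn} · Q(w) · ∏_{j=1}^{n} Pr_{(t,C')∼M̃(S, x₀∥x₁∥…∥x_{j−1})}[s_i ∉ C']. -/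
/-!
Applied to the singleton event `{q}` of an uncredited step, `(ε,0)`-closeness gives
`M(S∖{s}, x)(q) ≤ e^ε · M(S, x)(q) / Pr_{M(S,x)}[s not credited]`; if instead `s` is credited
almost surely, that probability is `0` and the step bound is trivial. The trace probabilities
are products of step probabilities, so multiplying the `n` step bounds gives the claim.
-/

open scoped ENNReal Classical

noncomputable section

namespace CCA

variable {α X D Y : Type*}

theorem mem_creditOf {w : List (X × Set D)} {s : D} : s ∈ creditOf w ↔ ∃ q ∈ w, s ∈ q.2 := by
  induction w with
  | nil => simp [creditOf]
  | cons q w ih => simp [creditOf, List.foldr_cons, ← ih]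

theorem traceProb_cons (M : Set D → List X → PMF (X × Set D)) (S : Set D) (x : List X)
    (q : X × Set D) (w : List (X × Set D)) :
    traceProb M S x (q :: w) = M S x q * traceProb M S (x ++ [q.1]) w := rfl

theorem pow_mul_traceProb_mul_prod_le_traceProb {M : Set D → List X → PMF (X × Set D)}
    {S S' : Set D} {P : X × Set D → Prop} {r : ℝ≥0∞} {c : List X → ℝ≥0∞}
    (hstep : ∀ x q, P q → r * M S' x q * c x ≤ M S x q) :
    ∀ (x0 : List X) (w : List (X × Set D)), (∀ q ∈ w, P q) →
      r ^ w.length * traceProb M S' x0 w *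
          ∏ j ∈ Finset.range w.length, c (x0 ++ (w.take j).map Prod.fst) ≤
        traceProb M S x0 w
  | _, [], _ => by simp [traceProb]
  | x0, q :: w, hw => by
    have ih := pow_mul_traceProb_mul_prod_le_traceProb hstep (x0 ++ [q.1]) w
      fun p hp => hw p (List.mem_cons_of_mem q hp)
    calc r ^ (q :: w).length * traceProb M S' x0 (q :: w) *
          ∏ j ∈ Finset.range (q :: w).length, c (x0 ++ ((q :: w).take j).map Prod.fst)
        = (r * M S' x0 q * c x0) * (r ^ w.length * traceProb M S' (x0 ++ [q.1]) w *
            ∏ j ∈ Finset.range w.length, c (x0 ++ [q.1] ++ (w.take j).map Prod.fst)) := by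
          simp only [List.length_cons, Finset.prod_range_succ', List.take_succ_cons,
            List.map_cons, List.take_zero, List.map_nil, List.append_nil, traceProb_cons,
            List.append_assoc, List.singleton_append]
          ring
      _ ≤ M S x0 q * traceProb M S (x0 ++ [q.1]) w :=
          mul_le_mul' (hstep x0 q (hw q List.mem_cons_self)) ih

theorem Close.ofReal_exp_neg_mul_le_of_subset {ε : ℝ} {P Q : Set α → ℝ≥0∞} {B E : Set α}
    (h : Close ε 0 (prCond P B) Q) (hE : E ⊆ B) :
    ENNReal.ofReal (Real.exp (-ε)) * Q E * P B ≤ P E := by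
  have hQ : Q E ≤ ENNReal.ofReal (Real.exp ε) * (P E / P B) := by
    simpa [prCond, Set.inter_eq_self_of_subset_left hE] using (h E).2
  have hexp : ENNReal.ofReal (Real.exp (-ε)) * ENNReal.ofReal (Real.exp ε) = 1 := by
    rw [← ENNReal.ofReal_mul (Real.exp_nonneg _), ← Real.exp_add, neg_add_cancel,
      Real.exp_zero, ENNReal.ofReal_one]
  calc ENNReal.ofReal (Real.exp (-ε)) * Q E * P B
      ≤ ENNReal.ofReal (Real.exp (-ε)) * (ENNReal.ofReal (Real.exp ε) * (P E / P B)) * P B := by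
        gcongr
    _ = P B * (P E / P B) := by rw [← mul_assoc, hexp, one_mul, mul_comm]
    _ ≤ P E := ENNReal.mul_div_le

theorem IsCCA.pmfKernel_step_le {ε : ℝ} {M : Set D → List X → PMF (Y × Set D)}
    (hM : IsCCA ε 0 (pmfKernel M)) {S : Set D} {s : D} (hs : s ∈ S) (x : List X)
    {q : Y × Set D} (hq : s ∉ q.2) :
    ENNReal.ofReal (Real.exp (-ε)) * M (S \ {s}) x q *
      (M S x).toOuterMeasure {p | s ∉ p.2} ≤ M S x q := by
  rcases hM S x s hs with hcredited | hclose
  · have hzero : (M S x).toOuterMeasure {p | s ∉ p.2} = 0 :=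
      (PMF.toOuterMeasure_apply_eq_zero_iff _ _).2 <| Set.disjoint_compl_right_iff_subset.2 <|
        (PMF.toOuterMeasure_apply_eq_one_iff _ _).1 hcredited
    simp [hzero]
  · simpa only [pmfKernel, PMF.toOuterMeasure_apply_singleton] using
      hclose.ofReal_exp_neg_mul_le_of_subset (E := {q}) (Set.singleton_subset_iff.2 hq)

theorem ofReal_exp_neg_mul_natCast (ε : ℝ) (n : ℕ) :
    ENNReal.ofReal (Real.exp (-(ε * n))) = ENNReal.ofReal (Real.exp (-ε)) ^ n := by
  rw [← ENNReal.ofReal_pow (Real.exp_nonneg _), ← Real.exp_nat_mul, mul_neg, mul_comm]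

/-- Trace inequality: if `M` is `(ε,0)`-CCA, `s ∈ S`, and the trace `w` never credits `s`,
then `P(w) ≥ e^{-ε n} · Q(w) · ∏_{j<n} Pr_{M(S, prompt_j)}[s not credited]`, where `P`, `Q`
are the trace probabilities of the crediting rollout on `S` resp. `S \ {s}`. -/
theorem stmt4 {X D : Type*} (M : Set D → List X → PMF (X × Set D)) (ε : ℝ)
    (hM : IsCCA ε 0 (pmfKernel M))
    (S : Set D) (s : D) (hs : s ∈ S) (x0 : List X)
    (w : List (X × Set D)) (hw : s ∉ creditOf w) :
    traceProb M S x0 w ≥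
      ENNReal.ofReal (Real.exp (-(ε * (w.length : ℝ)))) * traceProb M (S \ {s}) x0 w *
        ∏ j ∈ Finset.range w.length,
          (M S (x0 ++ (w.take j).map Prod.fst)).toOuterMeasure {q : X × Set D | s ∉ q.2} := by
  rw [ge_iff_le, ofReal_exp_neg_mul_natCast]
  exact pow_mul_traceProb_mul_prod_le_traceProb (fun x _ hq => hM.pmfKernel_step_le hs x hq)
    x0 w fun q hq hsq => hw (mem_creditOf.2 ⟨q, hq, hsq⟩)

end CCA
end
end

section
/- Let ℓ ≥ 1, γ ∈ (0,1), ε ≥ 0 and z ∈ {0,1}^ℓ. The total variation distance between the output distributions G_z({s1}, λ) and G_z(∅, λ) of the rollout of M_z on the empty prompt λ is at most 2^{−ℓ}. -/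
open scoped ENNReal Classical

noncomputable section

namespace CCA

variable {α X D Y : Type*}

/-- Coin flip: `true` with probability `min p 1`. -/
def coin (p : ℝ≥0∞) : PMF Bool := PMF.bernoulli (min p 1).toNNReal
  (by simpa using ENNReal.toNNReal_mono ENNReal.one_ne_top (min_le_right p 1))

/-- Two-point distribution: `x` with probability `p` (clipped at `1`), else `y`. -/
def twoPoint (p : ℝ≥0∞) (x y : α) : PMF α := PMF.map (fun b => if b then x else y) (coin p)

/-- Probability that the (plain) rollout of `M` on current prompt `x` produces the
trace of tokens `w`. -/
def pTraceProb (M : Set D → List X → PMF X) (S : Set D) : List X → List X → ℝ≥0∞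
  | _, [] => 1
  | x, y :: w => M S x y * pTraceProb M S (x ++ [y]) w

/-- A terminal token trace: the last token is `bot` and no earlier token is `bot`. -/
def pIsTerminal (bot : X) (w : List X) : Prop :=
  w.getLast? = some bot ∧ ∀ y ∈ w.dropLast, y ≠ bot

/-- Probability that the rollout of `M` on `(S, x0)` outputs the string `o`
(which includes the final `bot`). -/
def pRolloutProb (bot : X) (M : Set D → List X → PMF X) (S : Set D) (x0 : List X)
    (o : List X) : ℝ≥0∞ :=
  ∑' w : {w : List X // pIsTerminal bot w ∧ x0 ++ w = o}, pTraceProb M S x0 w.1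

/-- Event kernel of the rollout of `M`. -/
def pRolloutK (bot : X) (M : Set D → List X → PMF X) :
    Set D → List X → Set (List X) → ℝ≥0∞ :=
  fun S x0 E => ∑' o : E, pRolloutProb bot M S x0 ↑o

/-- The hard-family next-token predictor `M_z`. Tokens are `Option Bool`, where `some b` is
the bit `b` and `none` is the end token `⊥`; the data universe is `Unit = {s1}`. -/
def Mz (ℓ : ℕ) (γ ε : ℝ) (z : List Bool) (S : Set Unit) (x : List (Option Bool)) :
    PMF (Option Bool) :=
  if ∃ bs : List Bool, x = bs.map some ∧ bs.length ≤ ℓ then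
    if S ≠ ∅ ∧ x = z.map some then
      PMF.map some (coin (ENNReal.ofReal (1 / 2 + (1 - Real.exp (-ε) * (1 - γ)) / 2)))
    else PMF.map some (coin (1 / 2))
  else PMF.pure none

/-! Away from the prompt `z` the predictor `M_z` ignores the dataset, so the rollouts on
`{s1}` and on `∅` assign the same probability to every output that does not start with `z`.
Outputs starting with `z` carry total probability at most that of first generating `z`, which is
`2^{-ℓ}` under either dataset since every bit before `z` is complete is a fair coin. -/

section Rollout

variable {bot : X} {M M' : Set D → List X → PMF X} {S S' : Set D}

theorem pIsTerminal_nil : ¬ pIsTerminal bot [] := by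
  simp [pIsTerminal]

theorem pIsTerminal_cons {y : X} {w : List X} :
    pIsTerminal bot (y :: w) ↔ y = bot ∧ w = [] ∨ y ≠ bot ∧ pIsTerminal bot w := by
  cases w with
  | nil => simp [pIsTerminal]
  | cons a t =>
    simp only [pIsTerminal, List.getLast?_cons_cons, List.dropLast_cons_cons, List.mem_cons]
    grind

theorem pIsTerminal.of_append {u t : List X} (hu : bot ∉ u) (h : pIsTerminal bot (u ++ t)) :
    pIsTerminal bot t := by
  induction u with
  | nil => simpa using h
  | cons y u ih =>
    rw [List.mem_cons, not_or] at hu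
    rw [List.cons_append, pIsTerminal_cons] at h
    rcases h with ⟨rfl, -⟩ | ⟨-, h⟩
    · exact absurd rfl hu.1
    · exact ih hu.2 h

theorem pTraceProb_append (x u v : List X) :
    pTraceProb M S x (u ++ v) = pTraceProb M S x u * pTraceProb M S (x ++ u) v := by
  induction u generalizing x with
  | nil => simp [pTraceProb]
  | cons y u ih => simp [pTraceProb, ih, mul_assoc]

theorem pTraceProb_congr {x w : List X}
    (h : ∀ p y, p ++ [y] <+: w → M S (x ++ p) y = M' S' (x ++ p) y) :
    pTraceProb M S x w = pTraceProb M' S' x w := by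
  induction w generalizing x with
  | nil => rfl
  | cons y w ih =>
    simp only [pTraceProb]
    congr 1
    · simpa using h [] y (by simp)
    · refine ih fun p y' hp => ?_
      simpa using h (y :: p) y' (by simpa using hp)

theorem pTraceProb_eq_pow {x w : List X} {c : ℝ≥0∞}
    (h : ∀ p y, p ++ [y] <+: w → M S (x ++ p) y = c) :
    pTraceProb M S x w = c ^ w.length := by
  induction w generalizing x with
  | nil => simp [pTraceProb]
  | cons y w ih =>
    simp only [pTraceProb, List.length_cons, pow_succ']
    congr 1
    · simpa using h [] y (by simp)
    · refine ih fun p y' hp => ?_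
      simpa using h (y :: p) y' (by simpa using hp)

theorem tsum_list_eq_tsum_cons {f : List X → ℝ≥0∞} (hf : f [] = 0) :
    ∑' w, f w = ∑' (y) (w), f (y :: w) := by
  have hinj : Function.Injective fun p : X × List X => p.1 :: p.2 := by
    rintro ⟨_, _⟩ ⟨_, _⟩ h
    simpa using h
  rw [← ENNReal.tsum_prod, hinj.tsum_eq]
  rintro (_ | ⟨y, w⟩) hw
  · exact absurd hf hw
  · exact ⟨(y, w), rfl⟩

theorem tsum_pTraceProb_terminal_length_le_le_one (n : ℕ) (x : List X) :
    ∑' w, (if pIsTerminal bot w ∧ w.length ≤ n then pTraceProb M S x w else 0) ≤ 1 := by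
  induction n generalizing x with
  | zero =>
    refine (ENNReal.tsum_eq_zero.mpr fun w => if_neg ?_).trans_le zero_le_one
    rintro ⟨h, hw⟩
    exact pIsTerminal_nil (List.eq_nil_of_length_eq_zero (Nat.le_zero.mp hw) ▸ h)
  | succ n ih =>
    rw [tsum_list_eq_tsum_cons (by simp [pIsTerminal_nil]), ← (M S x).tsum_coe]
    refine ENNReal.tsum_le_tsum fun y => ?_
    calc ∑' w, (if pIsTerminal bot (y :: w) ∧ (y :: w).length ≤ n + 1 then
            pTraceProb M S x (y :: w) else 0)
        = M S x y * ∑' w, (if y = bot ∧ w = [] ∨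
              y ≠ bot ∧ pIsTerminal bot w ∧ w.length ≤ n then
            pTraceProb M S (x ++ [y]) w else 0) := by
          rw [← ENNReal.tsum_mul_left]
          refine tsum_congr fun w => ?_
          simp only [pIsTerminal_cons, List.length_cons, pTraceProb, mul_ite, mul_zero]
          congr 1
          grind
      _ ≤ M S x y * 1 := by
          gcongr
          by_cases hy : y = bot
          · simp [hy, pTraceProb]
          · simpa [hy] using ih (x ++ [y])
      _ = M S x y := mul_one _

theorem tsum_pTraceProb_terminal_le_one (x : List X) :
    ∑' w, (if pIsTerminal bot w then pTraceProb M S x w else 0) ≤ 1 := by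
  rw [ENNReal.tsum_eq_iSup_sum]
  refine iSup_le fun s => ?_
  calc ∑ w ∈ s, (if pIsTerminal bot w then pTraceProb M S x w else 0)
      ≤ ∑ w ∈ s, (if pIsTerminal bot w ∧ w.length ≤ s.sup List.length then
          pTraceProb M S x w else 0) :=
        Finset.sum_le_sum fun w hw => by simp [Finset.le_sup hw]
    _ ≤ _ := ENNReal.sum_le_tsum s
    _ ≤ 1 := tsum_pTraceProb_terminal_length_le_le_one _ x

theorem pRolloutProb_nil (o : List X) :
    pRolloutProb bot M S [] o = if pIsTerminal bot o then pTraceProb M S [] o else 0 := by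
  refine (tsum_subtype {w | pIsTerminal bot w ∧ [] ++ w = o} (pTraceProb M S [])).trans ?_
  rw [tsum_eq_single o fun w hw => Set.indicator_of_notMem (by simp [hw]) _]
  by_cases h : pIsTerminal bot o <;> simp [h]

theorem tsum_pRolloutProb_prefix_le {u : List X} (hu : bot ∉ u) :
    ∑' o : {o | u <+: o}, pRolloutProb bot M S [] o ≤ pTraceProb M S [] u := by
  have hrange : {o | u <+: o} = Set.range (u ++ ·) := by
    ext o
    simp [List.IsPrefix, eq_comm]
  rw [hrange, tsum_range _ (List.append_right_injective u)]
  simp only [pRolloutProb_nil, List.nil_append, pTraceProb_append]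
  calc ∑' t, (if pIsTerminal bot (u ++ t) then pTraceProb M S [] u * pTraceProb M S u t else 0)
      ≤ ∑' t, pTraceProb M S [] u * (if pIsTerminal bot t then pTraceProb M S u t else 0) :=
        ENNReal.tsum_le_tsum fun t => by
          split_ifs with h h'
          exacts [le_rfl, absurd (h.of_append hu) h', zero_le, zero_le]
    _ = pTraceProb M S [] u * ∑' t, (if pIsTerminal bot t then pTraceProb M S u t else 0) :=
        ENNReal.tsum_mul_left
    _ ≤ pTraceProb M S [] u := mul_le_of_le_one_right' (tsum_pTraceProb_terminal_le_one u)

end Rollout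

theorem _root_.ENNReal.tsum_subtype_le_add_of_eqOn_compl {α : Type*} {f g : α → ℝ≥0∞} {Z : Set α}
    {c : ℝ≥0∞} (hfg : Set.EqOn f g Zᶜ) (hZ : ∑' a : Z, f a ≤ c) (E : Set α) :
    ∑' a : E, f a ≤ ∑' a : E, g a + c :=
  calc ∑' a : E, f a
      ≤ ∑' a : ↑(E \ Z ∪ Z), f a := ENNReal.tsum_mono_subtype f (by simp)
    _ ≤ ∑' a : ↑(E \ Z), f a + ∑' a : Z, f a := ENNReal.tsum_union_le f _ _
    _ = ∑' a : ↑(E \ Z), g a + ∑' a : Z, f a := by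
        rw [tsum_congr fun a : ↑(E \ Z) => hfg a.2.2]
    _ ≤ ∑' a : E, g a + c := add_le_add (ENNReal.tsum_mono_subtype g Set.sdiff_subset) hZ

set_option linter.deprecated false in
theorem coin_half_apply (b : Bool) : coin (1 / 2) b = 1 / 2 := by
  cases b <;> simp [coin, PMF.bernoulli_apply, ENNReal.one_sub_inv_two, ENNReal.toNNReal_ofNat]

theorem _root_.PMF.map_some_apply_some {α : Type*} (p : PMF α) (a : α) : p.map some (some a) = p a := by
  simp [PMF.map_apply]

section Mz

variable {ℓ : ℕ} {γ ε : ℝ} {z : List Bool} {S S' : Set Unit}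

theorem Mz_eq_of_ne {x : List (Option Bool)} (hx : x ≠ z.map some) :
    Mz ℓ γ ε z S x = Mz ℓ γ ε z S' x := by
  simp [Mz, hx]

theorem Mz_apply_of_append_prefix {p : List (Option Bool)} {y : Option Bool} (hz : z.length = ℓ)
    (h : p ++ [y] <+: z.map some) : Mz ℓ γ ε z S p y = 1 / 2 := by
  have hlen : p.length < ℓ := by simpa [← hz] using h.length_le
  have hp : p = (z.take p.length).map some := by
    rw [List.map_take, ← List.prefix_iff_eq_take]
    exact (List.prefix_append p [y]).trans h
  obtain ⟨b, -, rfl⟩ := List.mem_map.mp (h.subset (by simp) : y ∈ z.map some)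
  have hne : p ≠ z.map some := fun he => by simp [he, hz] at hlen
  rw [Mz, if_pos ⟨_, hp, (List.length_take_le' _ _).trans hz.le⟩, if_neg fun hc => hne hc.2,
    PMF.map_some_apply_some, coin_half_apply]

theorem pTraceProb_Mz_map_some (hz : z.length = ℓ) :
    pTraceProb (Mz ℓ γ ε z) S [] (z.map some) = (1 / 2) ^ ℓ := by
  rw [pTraceProb_eq_pow fun p y h => Mz_apply_of_append_prefix hz h, List.length_map, hz]

theorem pRolloutProb_Mz_eq_of_not_prefix {o : List (Option Bool)} (ho : ¬ z.map some <+: o) :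
    pRolloutProb none (Mz ℓ γ ε z) S [] o = pRolloutProb none (Mz ℓ γ ε z) S' [] o := by
  rw [pRolloutProb_nil, pRolloutProb_nil, pTraceProb_congr fun p y hp => ?_]
  rw [List.nil_append]
  refine congrFun (congrArg _ (Mz_eq_of_ne ?_)) y
  rintro rfl
  exact ho ((List.prefix_append _ _).trans hp)

end Mz

theorem stmt7_general (ℓ : ℕ) (γ ε : ℝ)
    (z : List Bool) (hz : z.length = ℓ) :
    ∀ E : Set (List (Option Bool)),
      pRolloutK none (Mz ℓ γ ε z) {()} [] E ≤
          pRolloutK none (Mz ℓ γ ε z) ∅ [] E + ((1 : ℝ≥0∞) / 2) ^ ℓ ∧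
      pRolloutK none (Mz ℓ γ ε z) ∅ [] E ≤
          pRolloutK none (Mz ℓ γ ε z) {()} [] E + ((1 : ℝ≥0∞) / 2) ^ ℓ := by
  have prefix_mass (S : Set Unit) :
      ∑' o : {o | z.map some <+: o}, pRolloutProb none (Mz ℓ γ ε z) S [] o
        ≤ (1 / 2) ^ ℓ :=
    (tsum_pRolloutProb_prefix_le (by simp)).trans_eq (pTraceProb_Mz_map_some hz)
  have key (S S' : Set Unit) (E : Set (List (Option Bool))) :
      pRolloutK none (Mz ℓ γ ε z) S [] E
        ≤ pRolloutK none (Mz ℓ γ ε z) S' [] E + (1 / 2) ^ ℓ :=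
    ENNReal.tsum_subtype_le_add_of_eqOn_compl (fun _ ho => pRolloutProb_Mz_eq_of_not_prefix ho)
      (prefix_mass S) E
  exact fun E => ⟨key _ _ E, key _ _ E⟩

/-- The total variation distance between the output distributions `G_z({s1}, λ)` and
`G_z(∅, λ)` of the rollout of `M_z` on the empty prompt is at most `2^{-ℓ}`: every event's
probabilities differ by at most `2^{-ℓ}`. -/
theorem stmt7 (ℓ : ℕ) (hℓ : 1 ≤ ℓ) (γ ε : ℝ) (hγ0 : 0 < γ) (hγ1 : γ < 1) (hε : 0 ≤ ε)
    (z : List Bool) (hz : z.length = ℓ) :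
    ∀ E : Set (List (Option Bool)),
      pRolloutK none (Mz ℓ γ ε z) {()} [] E ≤
          pRolloutK none (Mz ℓ γ ε z) ∅ [] E + ((1 : ℝ≥0∞) / 2) ^ ℓ ∧
      pRolloutK none (Mz ℓ γ ε z) ∅ [] E ≤
          pRolloutK none (Mz ℓ γ ε z) {()} [] E + ((1 : ℝ≥0∞) / 2) ^ ℓ :=
  stmt7_general ℓ γ ε z hz

end CCA
end
end
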